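/- arXiv:2011.13395 — 9 statements merged into one kernel-verified Lean document; each statement's English description precedes it below -/
import Mathlib

section
/- Let Z ∈ ℝ^{n_1×⋯×n_d} be a nonzero tensor of order d and let U_1,…,U_d be any tensor train decomposition of Z of size (r_1,…,r_{d−1}). Then for every k ∈ {1,…,d−1}, r_k ≥ rank(Z^{<k>}), where Z^{<k>} is the k-th flattening of Z. -/
open Matrix Kronecker

namespace TT

/-- The cores of a tensor train decomposition (0-based indexing: Lean core `k`
is the paper's core `U_{k+1}`): core `k` assigns to each `i ∈ Fin (n k)` a real
`r k × r (k+1)` matrix. -/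
abbrev Cores (n r : ℕ → ℕ) : Type :=
  (k : ℕ) → Fin (n k) → Matrix (Fin (r k)) (Fin (r (k+1))) ℝ

/-- Left flattening `U_k^L`: entry `U_k(i)_{α,β}` at row `(i, α)`, column `β`. -/
def UL (n r : ℕ → ℕ) (U : Cores n r) (k : ℕ) :
    Matrix (Fin (n k) × Fin (r k)) (Fin (r (k+1))) ℝ :=
  Matrix.of fun q β => U k q.1 q.2 β

/-- Right flattening `U_k^R`: entry `U_k(i)_{α,β}` at row `α`, column pair `(β, i)`. -/
def UR (n r : ℕ → ℕ) (U : Cores n r) (k : ℕ) :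
    Matrix (Fin (r k)) (Fin (r (k+1)) × Fin (n k)) ℝ :=
  Matrix.of fun α q => U k q.2 α q.1

/-- The (1 × r k) matrix product `U_1(i_1) ⋯ U_k(i_k)` (starting from the all-ones
row of length `r 0`; with `r 0 = 1` this is the paper's product). -/
def prodRowOf (n r : ℕ → ℕ) (U : Cores n r) :
    (k : ℕ) → ((j : Fin k) → Fin (n j.val)) → Fin (r k) → ℝ
  | 0, _ => fun _ => 1
  | k + 1, row => fun β =>
      ∑ α : Fin (r k),
        prodRowOf n r U k (fun j => row j.castSucc) α * U k (row ⟨k, Nat.lt_succ_self k⟩) α β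

/-- Value of the TT tensor with cores `U` at a multi-index:
`Z(i_1,…,i_d) = U_1(i_1) ⋯ U_d(i_d)` (scalar, given `r 0 = r d = 1`). -/
def ttValue (n r : ℕ → ℕ) (d : ℕ) (U : Cores n r) (i : (j : Fin d) → Fin (n j.val)) : ℝ :=
  ∑ β : Fin (r d), prodRowOf n r U d i β

/-- The (r k × 1, as a column) matrix product `U_{k+1}(i_{k+1}) ⋯ U_d(i_d)` (0-based cores). -/
def prodColOf (n r : ℕ → ℕ) (d : ℕ) (U : Cores n r) (k : ℕ)
    (row : (j : Fin (d - k)) → Fin (n (k + j.val))) : Fin (r k) → ℝ :=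
  if h : k < d then
    fun α =>
      ∑ β : Fin (r (k + 1)),
        U k (row ⟨0, by omega⟩) α β *
          prodColOf n r d U (k + 1)
            (fun j =>
              Fin.cast (show n (k + (j.val + 1)) = n (k + 1 + j.val) from congrArg n (by omega))
                (row ⟨j.val + 1, by have := j.isLt; omega⟩)) β
  else fun _ => 1
termination_by d - k

/-- `k`-th flattening `Z^{<k>}` of a tensor of order `d`: rows are multi-indices
`(i_1,…,i_k)`, columns are multi-indices `(i_{k+1},…,i_d)`. -/
def flatten (n : ℕ → ℕ) (d : ℕ) (Z : ((j : Fin d) → Fin (n j.val)) → ℝ) (k : ℕ) :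
    Matrix ((j : Fin k) → Fin (n j.val)) ((j : Fin (d - k)) → Fin (n (k + j.val))) ℝ :=
  Matrix.of fun row col =>
    Z fun j =>
      if h : j.val < k then row ⟨j.val, h⟩
      else
        Fin.cast (show n (k + (j.val - k)) = n j.val from congrArg n (by omega))
          (col ⟨j.val - k, by have := j.isLt; omega⟩)

/-- Left interface matrices: `X_{≤0} = 1` and `X_{≤k} = (I_{n_k} ⊗ X_{≤k-1}) U_k^L`,
rows reindexed along the canonical identification of multi-indices. -/
def leftInterface (n r : ℕ → ℕ) (U : Cores n r) :
    (k : ℕ) → Matrix ((j : Fin k) → Fin (n j.val)) (Fin (r k)) ℝ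
  | 0 => Matrix.of fun _ _ => 1
  | k + 1 =>
      (((1 : Matrix (Fin (n k)) (Fin (n k)) ℝ) ⊗ₖ leftInterface n r U k) * UL n r U k).submatrix
        (fun row => (row ⟨k, Nat.lt_succ_self k⟩, fun j => row j.castSucc)) id

/-- Right interface matrices (0-based: Lean `rightInterface n r d U k` is the paper's
`X_{≥k+1}`): `X_{≥d+1} = 1` and `X_{≥k}ᵀ = U_k^R (X_{≥k+1}ᵀ ⊗ I_{n_k})`,
rows reindexed along the canonical identification of multi-indices. -/
def rightInterface (n r : ℕ → ℕ) (d : ℕ) (U : Cores n r) (k : ℕ) :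
    Matrix ((j : Fin (d - k)) → Fin (n (k + j.val))) (Fin (r k)) ℝ :=
  if h : k < d then
    ((UR n r U k *
          ((rightInterface n r d U (k + 1))ᵀ ⊗ₖ (1 : Matrix (Fin (n k)) (Fin (n k)) ℝ)))ᵀ).submatrix
      (fun row =>
        (fun j =>
            Fin.cast (show n (k + (j.val + 1)) = n (k + 1 + j.val) from congrArg n (by omega))
              (row ⟨j.val + 1, by have := j.isLt; omega⟩),
          row ⟨0, by omega⟩))
      id
  else Matrix.of fun _ _ => 1
termination_by d - k

/-- Left variational interface matrices: `V_{≤0} = 0` and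
`V_{≤k} = (I_{n_k} ⊗ V_{≤k-1}) U_k^L + (I_{n_k} ⊗ X_{≤k-1}) δV_k^L`. -/
def leftVariational (n r : ℕ → ℕ) (U δV : Cores n r) :
    (k : ℕ) → Matrix ((j : Fin k) → Fin (n j.val)) (Fin (r k)) ℝ
  | 0 => 0
  | k + 1 =>
      ((((1 : Matrix (Fin (n k)) (Fin (n k)) ℝ) ⊗ₖ leftVariational n r U δV k) * UL n r U k) +
          (((1 : Matrix (Fin (n k)) (Fin (n k)) ℝ) ⊗ₖ leftInterface n r U k) * UL n r δV k)).submatrix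
        (fun row => (row ⟨k, Nat.lt_succ_self k⟩, fun j => row j.castSucc)) id

/-- Right variational interface matrices (Lean `k` ↦ paper `V_{≥k+1}`): `V_{≥d+1} = 0` and
`V_{≥k}ᵀ = U_k^R (V_{≥k+1}ᵀ ⊗ I_{n_k}) + δV_k^R (X_{≥k+1}ᵀ ⊗ I_{n_k})`. -/
def rightVariational (n r : ℕ → ℕ) (d : ℕ) (U δV : Cores n r) (k : ℕ) :
    Matrix ((j : Fin (d - k)) → Fin (n (k + j.val))) (Fin (r k)) ℝ :=
  if h : k < d then
    ((UR n r U k *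
            ((rightVariational n r d U δV (k + 1))ᵀ ⊗ₖ (1 : Matrix (Fin (n k)) (Fin (n k)) ℝ)) +
          UR n r δV k *
            ((rightInterface n r d U (k + 1))ᵀ ⊗ₖ (1 : Matrix (Fin (n k)) (Fin (n k)) ℝ)))ᵀ).submatrix
      (fun row =>
        (fun j =>
            Fin.cast (show n (k + (j.val + 1)) = n (k + 1 + j.val) from congrArg n (by omega))
              (row ⟨j.val + 1, by have := j.isLt; omega⟩),
          row ⟨0, by omega⟩))
      id
  else 0
termination_by d - k

lemma key (n r : ℕ → ℕ) (d : ℕ) (U : Cores n r) (i : (j : Fin d) → Fin (n j.val)) :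
    ∀ m k, ∀ _hkm : k + m = d,
      (∑ α : Fin (r k),
        prodRowOf n r U k (fun j => i ⟨j.val, by have := j.isLt; omega⟩) α *
        prodColOf n r d U k (fun j => i ⟨k + j.val, by have := j.isLt; omega⟩) α)
        = ttValue n r d U i := by
  intro m
  induction m with
  | zero =>
      intro k hk
      subst hk
      rw [ttValue]
      have hcol : prodColOf n r (k + 0) U k
          (fun j => i ⟨k + j.val, by have := j.isLt; omega⟩) = fun _ => 1 := by
        rw [prodColOf]; simp
      rw [hcol]
      have hrow : (fun j : Fin k => i ⟨j.val, by have := j.isLt; omega⟩) = i := by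
        funext j
        rfl
      rw [hrow]; simp
  | succ m ih =>
      intro k hk
      have hkd : k < d := by omega
      rw [prodColOf]
      rw [dif_pos hkd]
      have step : ∀ (row' : (j : Fin (d - (k+1))) → Fin (n (k + 1 + j.val))),
          (∑ α : Fin (r k),
            prodRowOf n r U k (fun j => i ⟨j.val, by have := j.isLt; omega⟩) α *
            ∑ β : Fin (r (k+1)), U k (i ⟨k + 0, by omega⟩) α β * prodColOf n r d U (k+1) row' β)
          = ∑ β : Fin (r (k+1)),
              (∑ α : Fin (r k),
                prodRowOf n r U k (fun j => i ⟨j.val, by have := j.isLt; omega⟩) α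
                  * U k (i ⟨k + 0, by omega⟩) α β)
                * prodColOf n r d U (k+1) row' β := by
        intro row'
        simp only [Finset.mul_sum]
        rw [Finset.sum_comm]
        refine Finset.sum_congr rfl fun β _ => ?_
        rw [Finset.sum_mul]
        refine Finset.sum_congr rfl fun α _ => ?_
        ring
      rw [step]
      have hrow : ∀ β : Fin (r (k+1)),
          (∑ α : Fin (r k),
            prodRowOf n r U k (fun j => i ⟨j.val, by have := j.isLt; omega⟩) α
              * U k (i ⟨k + 0, by omega⟩) α β)
          = prodRowOf n r U (k+1) (fun j => i ⟨j.val, by have := j.isLt; omega⟩) β := by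
        intro β
        rw [prodRowOf]
        rfl
      have hcol : (fun j : Fin (d - (k+1)) =>
          Fin.cast (congrArg n (by omega : k + (j.val + 1) = k + 1 + j.val))
            ((fun j : Fin (d - k) => i ⟨k + j.val, by have := j.isLt; omega⟩)
              ⟨j.val + 1, by have := j.isLt; omega⟩))
          = fun j : Fin (d - (k+1)) => i ⟨k + 1 + j.val, by have := j.isLt; omega⟩ := by
        funext j
        have hidx : (⟨k + (j.val + 1), by have := j.isLt; omega⟩ : Fin d)
            = ⟨k + 1 + j.val, by have := j.isLt; omega⟩ := by
          apply Fin.ext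
          show k + (j.val + 1) = k + 1 + j.val
          omega
        apply Fin.ext
        rw [Fin.coe_cast]
        exact congrArg (fun x => (i x).val) hidx
      simp only [hrow]
      calc _ = ∑ β : Fin (r (k+1)),
            prodRowOf n r U (k+1) (fun j => i ⟨j.val, by have := j.isLt; omega⟩) β *
            prodColOf n r d U (k+1)
              (fun j => i ⟨k + 1 + j.val, by have := j.isLt; omega⟩) β := by
              refine Finset.sum_congr rfl fun β _ => ?_
              congr 1
              exact congrArg (fun f => prodColOf n r d U (k+1) f β) hcol
        _ = ttValue n r d U i := ih (k+1) (by omega)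

/-- If `Z ≠ 0` admits a TT decomposition `U` of size `(r 1, …, r (d-1))`
(with `r 0 = r d = 1`), then for every `k ∈ {1,…,d-1}` the rank of the `k`-th flattening
of `Z` is at most `r k`. -/
theorem tt_rank_le_decomposition_size (n r : ℕ → ℕ) (d : ℕ)
    (Z : ((j : Fin d) → Fin (n j.val)) → ℝ) (hZ : Z ≠ 0)
    (hr0 : r 0 = 1) (hrd : r d = 1) (U : Cores n r)
    (hU : ∀ i, Z i = ttValue n r d U i) :
    ∀ k, 1 ≤ k → k ≤ d - 1 → (flatten n d Z k).rank ≤ r k := by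
  intro k _ hk
  set A : Matrix ((j : Fin k) → Fin (n j.val)) (Fin (r k)) ℝ :=
    Matrix.of fun row α => prodRowOf n r U k row α with hA
  set B : Matrix (Fin (r k)) ((j : Fin (d - k)) → Fin (n (k + j.val))) ℝ :=
    Matrix.of fun α col => prodColOf n r d U k col α with hB
  have hfac : flatten n d Z k = A * B := by
    funext row col
    have hkd : k ≤ d := by omega
    rw [flatten]
    simp only [Matrix.mul_apply, Matrix.of_apply, hA, hB]
    set i : (j : Fin d) → Fin (n j.val) := fun j =>
      if h : j.val < k then row ⟨j.val, h⟩
      else Fin.cast (show n (k + (j.val - k)) = n j.val from congrArg n (by omega))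
        (col ⟨j.val - k, by have := j.isLt; omega⟩) with hi
    have := key n r d U i (d - k) k (by omega)
    rw [hU i, ← this]
    have h1 : (fun j : Fin k => i ⟨j.val, by have := j.isLt; omega⟩) = row := by
      funext j
      show i ⟨j.val, _⟩ = row j
      simp only [hi]
      rw [dif_pos j.isLt]
    have h2 : (fun j : Fin (d - k) => i ⟨k + j.val, by have := j.isLt; omega⟩) = col := by
      funext j
      show i ⟨k + j.val, _⟩ = col j
      simp only [hi]
      rw [dif_neg (by omega : ¬ k + j.val < k)]
      apply Fin.ext
      rw [Fin.coe_cast]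
      exact congrArg (fun x => (col x).val)
        (Fin.ext (show k + j.val - k = j.val by omega))
    rw [h1, h2]
  rw [hfac]
  calc (A * B).rank ≤ A.rank := Matrix.rank_mul_le_left A B
    _ ≤ Fintype.card (Fin (r k)) := Matrix.rank_le_card_width A
    _ = r k := Fintype.card_fin _

end TT
end

section
/- Let Z ∈ ℝ^{n_1×⋯×n_d} be a nonzero tensor of order d and set r̃_k = rank(Z^{<k>}) for k ∈ {1,…,d−1}. Then there exists a tensor train decomposition U_1,…,U_d of Z of size exactly (r̃_1,…,r̃_{d−1}). -/
open Matrix Kronecker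

namespace TT

/-!
A rank factorization `Z^{<k>} = A_k B_k` of inner dimension `r̃_k` has `B_k` of full row rank,
so `B_k B'_k = 1` for some `B'_k`. Take the cores
`U_k(i)_{α,β} = ∑_c B_k(α, (i, c)) B'_{k+1}(c, β)`. Since the `(k+1)`-st flattening is a
reshaping of the `k`-th, `A_{k+1} = Z^{<k+1>} B'_{k+1}` gives
`U_1(i_1) ⋯ U_k(i_k) = A_k(i_1, …, i_k)` by induction on `k`. At the two ends, where the size
is `1`, the factors `A_0` and `B_d` are all-ones.
-/

theorem _root_.Matrix.exists_eq_mul_and_mul_eq_one_of_rank_eq {K m p : Type*} [Field K]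
    [Fintype m] [Fintype p] (M : Matrix m p K) {r : ℕ} (hr : M.rank = r) :
    ∃ (A : Matrix m (Fin r) K) (B : Matrix (Fin r) p K) (B' : Matrix p (Fin r) K),
      M = A * B ∧ B * B' = 1 := by
  classical
  let e : LinearMap.range M.mulVecLin ≃ₗ[K] (Fin r → K) :=
    LinearEquiv.ofFinrankEq _ _ (by rw [Module.finrank_fin_fun]; exact hr)
  let f := e.toLinearMap ∘ₗ M.mulVecLin.rangeRestrict
  obtain ⟨g, hg⟩ := LinearMap.exists_rightInverse_of_surjective f
    (by simp [f, LinearMap.range_comp, LinearMap.range_rangeRestrict])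
  refine ⟨LinearMap.toMatrix' ((LinearMap.range M.mulVecLin).subtype ∘ₗ e.symm.toLinearMap),
    LinearMap.toMatrix' f, LinearMap.toMatrix' g, ?_, ?_⟩
  · have hM : ((LinearMap.range M.mulVecLin).subtype ∘ₗ e.symm.toLinearMap) ∘ₗ f =
        M.mulVecLin := by
      ext; simp [f]
    rw [← LinearMap.toMatrix'_comp, hM, ← Matrix.toLin'_apply', LinearMap.toMatrix'_toLin']
  · rw [← LinearMap.toMatrix'_comp, hg, LinearMap.toMatrix'_id]

theorem _root_.Matrix.exists_eq_ones_mul_of_unique_rows {R m p : Type*} [Semiring R] [Unique m]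
    [Fintype p] (M : Matrix m p R) {r : ℕ} (hr : r = 1) :
    ∃ B : Matrix (Fin r) p R, M = (Matrix.of fun _ _ => 1 : Matrix m (Fin r) R) * B := by
  subst hr
  refine ⟨Matrix.of fun _ c => M default c, ?_⟩
  ext i c
  rw [Matrix.mul_apply, Unique.eq_default i]
  simp

theorem _root_.Matrix.exists_eq_mul_ones_of_unique_cols {R m p : Type*} [Semiring R] [Unique p]
    (M : Matrix m p R) {r : ℕ} (hr : r = 1) :
    ∃ A : Matrix m (Fin r) R, M = A * (Matrix.of fun _ _ => 1 : Matrix (Fin r) p R) := by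
  subst hr
  refine ⟨Matrix.of fun i _ => M i default, ?_⟩
  ext i c
  rw [Matrix.mul_apply, Unique.eq_default c]
  simp

theorem _root_.Matrix.ones_mul_ones_of_unique {R p : Type*} [Semiring R] [Fintype p] [Unique p]
    {r : ℕ} (hr : r = 1) :
    (Matrix.of fun _ _ => 1 : Matrix (Fin r) p R) * (Matrix.of fun _ _ => 1 : Matrix p (Fin r) R) =
      (1 : Matrix (Fin r) (Fin r) R) := by
  subst hr
  ext α β
  rw [Matrix.mul_apply, Subsingleton.elim α β]
  simp

def colCons (n : ℕ → ℕ) (d k : ℕ) (i : Fin (n k))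
    (c : (j : Fin (d - (k + 1))) → Fin (n (k + 1 + j.val))) :
    (j : Fin (d - k)) → Fin (n (k + j.val)) :=
  fun j =>
    if h : j.val = 0 then Fin.cast (congrArg n (by omega)) i
    else Fin.cast (congrArg n (by omega : k + 1 + (j.val - 1) = k + j.val))
      (c ⟨j.val - 1, by have := j.isLt; omega⟩)

theorem flatten_succ_apply {n : ℕ → ℕ} {d : ℕ} (Z : ((j : Fin d) → Fin (n j.val)) → ℝ) (k : ℕ)
    (row : (j : Fin (k + 1)) → Fin (n j.val))
    (c : (j : Fin (d - (k + 1))) → Fin (n (k + 1 + j.val))) :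
    flatten n d Z (k + 1) row c =
      flatten n d Z k (fun j => row j.castSucc) (colCons n d k (row ⟨k, k.lt_succ_self⟩) c) := by
  simp only [flatten, Matrix.of_apply, colCons]
  congr 1
  funext ⟨j, hj⟩
  apply Fin.ext
  rcases lt_trichotomy j k with hjk | rfl | hjk
  · simp [hjk, Nat.lt_succ_of_lt hjk]
  · simp
  · have hidx : j - (k + 1) = j - k - 1 := by omega
    simp only [Order.lt_add_one_iff, hjk.not_ge, ↓reduceDIte, Fin.val_cast, hjk.not_gt,
      Nat.sub_ne_zero_of_lt hjk, Fin.cast_cast]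
    exact congrArg (fun x => (c x : ℕ)) (Fin.ext hidx)

theorem flatten_self_apply {n : ℕ → ℕ} {d : ℕ} (Z : ((j : Fin d) → Fin (n j.val)) → ℝ)
    (i : (j : Fin d) → Fin (n j.val)) (c : (j : Fin (d - d)) → Fin (n (d + j.val))) :
    flatten n d Z d i c = Z i := by
  simp [flatten]

def coresOfFactors (n r : ℕ → ℕ) (d : ℕ)
    (B : (k : ℕ) → Matrix (Fin (r k)) ((j : Fin (d - k)) → Fin (n (k + j.val))) ℝ)
    (B' : (k : ℕ) → Matrix ((j : Fin (d - k)) → Fin (n (k + j.val))) (Fin (r k)) ℝ) :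
    Cores n r :=
  fun k i => Matrix.of fun α β => ∑ c, B k α (colCons n d k i c) * B' (k + 1) c β

theorem prodRowOf_coresOfFactors {n r : ℕ → ℕ} {d : ℕ} {Z : ((j : Fin d) → Fin (n j.val)) → ℝ}
    {A : (k : ℕ) → Matrix ((j : Fin k) → Fin (n j.val)) (Fin (r k)) ℝ}
    {B : (k : ℕ) → Matrix (Fin (r k)) ((j : Fin (d - k)) → Fin (n (k + j.val))) ℝ}
    {B' : (k : ℕ) → Matrix ((j : Fin (d - k)) → Fin (n (k + j.val))) (Fin (r k)) ℝ}
    (hA0 : ∀ row β, A 0 row β = 1)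
    (hfac : ∀ k ≤ d, flatten n d Z k = A k * B k)
    (hinv : ∀ k, 1 ≤ k → k ≤ d → B k * B' k = 1) :
    ∀ k ≤ d, ∀ row β, prodRowOf n r (coresOfFactors n r d B B') k row β = A k row β := by
  intro k
  induction k with
  | zero => exact fun _ row β => (hA0 row β).symm
  | succ k ih =>
    intro hk row β
    have hA : A (k + 1) = flatten n d Z (k + 1) * B' (k + 1) := by
      rw [hfac (k + 1) hk, Matrix.mul_assoc, hinv (k + 1) (by omega) hk, Matrix.mul_one]
    rw [hA, Matrix.mul_apply]
    simp only [prodRowOf, coresOfFactors, Matrix.of_apply, ih (by omega), flatten_succ_apply,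
      hfac k (by omega), Matrix.mul_apply, Finset.mul_sum, Finset.sum_mul, mul_assoc]
    exact Finset.sum_comm

theorem exists_flatten_factorization {n : ℕ → ℕ} {d : ℕ} (hd : 1 ≤ d)
    {Z : ((j : Fin d) → Fin (n j.val)) → ℝ} {rt : ℕ → ℕ} (hrt0 : rt 0 = 1) (hrtd : rt d = 1)
    (hrt : ∀ k, 1 ≤ k → k ≤ d - 1 → rt k = (flatten n d Z k).rank) (k : ℕ) :
    ∃ (A : Matrix ((j : Fin k) → Fin (n j.val)) (Fin (rt k)) ℝ)
      (B : Matrix (Fin (rt k)) ((j : Fin (d - k)) → Fin (n (k + j.val))) ℝ)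
      (B' : Matrix ((j : Fin (d - k)) → Fin (n (k + j.val))) (Fin (rt k)) ℝ),
      (k ≤ d → flatten n d Z k = A * B) ∧ (1 ≤ k → k ≤ d → B * B' = 1) ∧
      (k = 0 → ∀ row β, A row β = 1) ∧ (k = d → ∀ α c, B α c = 1) := by
  rcases Nat.eq_zero_or_pos k with rfl | hk0
  · obtain ⟨B, hB⟩ := (flatten n d Z 0).exists_eq_ones_mul_of_unique_rows hrt0
    exact ⟨_, B, 0, fun _ => hB, by omega, fun _ _ _ => rfl, by omega⟩
  rcases lt_trichotomy k d with hkd | rfl | hdk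
  · obtain ⟨A, B, B', hAB, hBB'⟩ :=
      (flatten n d Z k).exists_eq_mul_and_mul_eq_one_of_rank_eq (hrt k hk0 (by omega)).symm
    exact ⟨A, B, B', fun _ => hAB, fun _ _ => hBB', by omega, by omega⟩
  · have : IsEmpty (Fin (k - k)) := by rw [Nat.sub_self]; infer_instance
    obtain ⟨A, hA⟩ := (flatten _ _ Z k).exists_eq_mul_ones_of_unique_cols hrtd
    exact ⟨A, _, _, fun _ => hA, fun _ _ => Matrix.ones_mul_ones_of_unique hrtd, by omega,
      fun _ _ _ => rfl⟩
  · exact ⟨0, 0, 0, by omega, by omega, by omega, by omega⟩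

theorem tt_minimal_decomposition_exists_general (n : ℕ → ℕ) (d : ℕ) (hd : 1 ≤ d)
    (Z : ((j : Fin d) → Fin (n j.val)) → ℝ)
    (rt : ℕ → ℕ) (hrt0 : rt 0 = 1) (hrtd : rt d = 1)
    (hrt : ∀ k, 1 ≤ k → k ≤ d - 1 → rt k = (flatten n d Z k).rank) :
    ∃ U : Cores n rt, ∀ i, Z i = ttValue n rt d U i := by
  choose A B B' hfac hinv hA0 hBd using exists_flatten_factorization hd hrt0 hrtd hrt
  refine ⟨coresOfFactors n rt d B B', fun i => ?_⟩
  have c : (j : Fin (d - d)) → Fin (n (d + j.val)) := fun j => absurd j.isLt (by omega)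
  calc Z i = flatten n d Z d i c := (flatten_self_apply Z i c).symm
    _ = ∑ β, A d i β := by simp [hfac d le_rfl, Matrix.mul_apply, hBd d rfl]
    _ = ttValue n rt d (coresOfFactors n rt d B B') i := by
      simp [ttValue, prodRowOf_coresOfFactors (hA0 0 rfl) hfac hinv d le_rfl]

/-- A nonzero tensor `Z` of order `d ≥ 1` admits a TT decomposition of
size exactly `(r̃ 1, …, r̃ (d-1))`, where `r̃ k` is the rank of the `k`-th flattening
(and `r̃ 0 = r̃ d = 1`). -/
theorem tt_minimal_decomposition_exists (n : ℕ → ℕ) (d : ℕ) (hd : 1 ≤ d)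
    (Z : ((j : Fin d) → Fin (n j.val)) → ℝ) (hZ : Z ≠ 0)
    (rt : ℕ → ℕ) (hrt0 : rt 0 = 1) (hrtd : rt d = 1)
    (hrt : ∀ k, 1 ≤ k → k ≤ d - 1 → rt k = (flatten n d Z k).rank) :
    ∃ U : Cores n rt, ∀ i, Z i = ttValue n rt d U i :=
  tt_minimal_decomposition_exists_general n d hd Z rt hrt0 hrtd hrt

end TT
end

section
/- Let X_< ∈ ℝ^{m×p} satisfy X_<ᵀX_< = I_p, let X̃_> ∈ ℝ^{q×r} satisfy X̃_>ᵀX̃_> = I_r, let R ∈ ℝ^{r×r} be invertible, and set X_> = X̃_> R. If δV, δṼ ∈ ℝ^{np×r} satisfy (I_n ⊗ X_<) δṼ X̃_>ᵀ = (I_n ⊗ X_<) δV X_>ᵀ, then δṼ = δV Rᵀ. (This is the interchange between the two parametrizations of tangent vectors: the variational core flattenings satisfy δṼ_k^L = δV_k^L R_kᵀ, where X_{≥k+1} = X̃_{≥k+1}R_k relates the interface matrices of the left-orthogonal and right-orthogonalized decompositions.) -/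
open Matrix Kronecker

/-- Interchange between the two parametrizations of tangent vectors:
with `X_<` and `X̃_>` having orthonormal columns, `R` invertible, and `X_> = X̃_> R`, if
`(I_n ⊗ X_<) δṼ X̃_>ᵀ = (I_n ⊗ X_<) δV X_>ᵀ` then `δṼ = δV Rᵀ`. -/
theorem tangent_param_interchange (m p q r n : ℕ)
    (Xlt : Matrix (Fin m) (Fin p) ℝ) (hXlt : Xltᵀ * Xlt = 1)
    (Xtgt : Matrix (Fin q) (Fin r) ℝ) (hXtgt : Xtgtᵀ * Xtgt = 1)
    (R : Matrix (Fin r) (Fin r) ℝ) (hR : IsUnit R)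
    (δV δVt : Matrix (Fin n × Fin p) (Fin r) ℝ)
    (h : ((1 : Matrix (Fin n) (Fin n) ℝ) ⊗ₖ Xlt) * δVt * Xtgtᵀ =
        ((1 : Matrix (Fin n) (Fin n) ℝ) ⊗ₖ Xlt) * δV * (Xtgt * R)ᵀ) :
    δVt = δV * Rᵀ := by
  have h2 := congrArg (fun M => (((1 : Matrix (Fin n) (Fin n) ℝ) ⊗ₖ Xlt)ᵀ * M) * Xtgt) h
  simp only [Matrix.mul_assoc] at h2
  have hkk : ((1 : Matrix (Fin n) (Fin n) ℝ) ⊗ₖ Xlt)ᵀ *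
      ((1 : Matrix (Fin n) (Fin n) ℝ) ⊗ₖ Xlt) = 1 := by
    rw [← Matrix.kroneckerMap_transpose, ← Matrix.mul_kronecker_mul, Matrix.transpose_one,
      Matrix.one_mul, hXlt, Matrix.one_kronecker_one]
  simp only [← Matrix.mul_assoc] at h2
  rw [hkk, Matrix.one_mul, Matrix.one_mul, Matrix.mul_assoc δVt, hXtgt, Matrix.mul_one,
    Matrix.transpose_mul, ← Matrix.mul_assoc δV, Matrix.mul_assoc (δV * Rᵀ), hXtgt,
    Matrix.mul_one] at h2
  exact h2
end

section
/- Let U_1,…,U_d be a left-orthogonal tensor train decomposition of X ∈ ℝ^{n_1×⋯×n_d} with left interface matrices X_{≤k}, and let δV_1,…,δV_d be variational cores satisfying the gauge conditions (δV_k^L)ᵀU_k^L = 0 for all k ∈ {1,…,d−1}, with left variational interface matrices V_{≤k}. Then V_{≤k}ᵀ X_{≤k} = 0 for every k ∈ {1,…,d−1}. -/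
open Matrix Kronecker

namespace TT

/-- The canonical identification of multi-indices of length `k+1` with pairs. -/
def snocEquiv (n : ℕ → ℕ) (k : ℕ) :
    ((j : Fin (k+1)) → Fin (n j.val)) ≃ Fin (n k) × ((j : Fin k) → Fin (n j.val)) where
  toFun row := (row ⟨k, Nat.lt_succ_self k⟩, fun j => row j.castSucc)
  invFun p := Fin.snoc (α := fun j : Fin (k+1) => Fin (n j.val)) p.2 p.1
  left_inv row := by
    funext j
    refine Fin.lastCases ?_ ?_ j
    · exact Fin.snoc_last _ _
    · intro i; exact Fin.snoc_castSucc _ _ _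
  right_inv p := by
    refine Prod.ext ?_ ?_
    · show Fin.snoc (α := fun j : Fin (k+1) => Fin (n j.val)) p.2 p.1 ⟨k, Nat.lt_succ_self k⟩ = p.1
      exact Fin.snoc_last _ _
    · funext j
      show Fin.snoc (α := fun j : Fin (k+1) => Fin (n j.val)) p.2 p.1 j.castSucc = p.2 j
      exact Fin.snoc_castSucc _ _ _

lemma submatrix_transpose_mul {α β m m' : Type*} [Fintype α] [Fintype β]
    (A : Matrix α m ℝ) (B : Matrix α m' ℝ) (f : β → α) (hf : Function.Bijective f) :
    (A.submatrix f id)ᵀ * (B.submatrix f id) = Aᵀ * B := by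
  ext i j
  simp only [Matrix.mul_apply, Matrix.transpose_apply, Matrix.submatrix_apply, id]
  exact hf.sum_comp fun y => A y i * B y j

lemma submatrix_add' {α β m m' : Type*} (A B : Matrix α m ℝ) (f : β → α) (g : m' → m) :
    (A + B).submatrix f g = A.submatrix f g + B.submatrix f g := rfl

lemma one_kron_transpose_mul {m p q s : Type*} [Fintype m] [DecidableEq m] [Fintype p]
    (A : Matrix p q ℝ) (B : Matrix p s ℝ) :
    ((1 : Matrix m m ℝ) ⊗ₖ A)ᵀ * ((1 : Matrix m m ℝ) ⊗ₖ B) = 1 ⊗ₖ (Aᵀ * B) := by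
  rw [← Matrix.kroneckerMap_transpose, Matrix.transpose_one, ← Matrix.mul_kronecker_mul,
    Matrix.one_mul]

/-- For a left-orthogonal TT decomposition `U` of `X` and variational
cores `δV` satisfying the gauge conditions `(δV_k^L)ᵀ U_k^L = 0` (paper indices
`k ∈ {1,…,d-1}`, Lean core indices `{0,…,d-2}`), the left variational interface matrices
satisfy `V_{≤k}ᵀ X_{≤k} = 0` for every `k ∈ {1,…,d-1}`. -/
theorem leftVariational_cancellation (n r : ℕ → ℕ) (d : ℕ)
    (hr0 : r 0 = 1) (hrd : r d = 1) (U : Cores n r)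
    (X : ((j : Fin d) → Fin (n j.val)) → ℝ)
    (hX : ∀ i, X i = ttValue n r d U i)
    (horth : ∀ k, k < d - 1 → (UL n r U k)ᵀ * UL n r U k = 1)
    (δV : Cores n r)
    (hgauge : ∀ k, k < d - 1 → (UL n r δV k)ᵀ * UL n r U k = 0) :
    ∀ k, 1 ≤ k → k ≤ d - 1 →
      (leftVariational n r U δV k)ᵀ * leftInterface n r U k = 0 := by
  have horthI : ∀ k, k ≤ d - 1 →
      (leftInterface n r U k)ᵀ * leftInterface n r U k = 1 := by
    intro k
    induction k with
    | zero =>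
      intro _
      ext α β
      have hαβ : α = β := by
        have h1 := α.isLt; have h2 := β.isLt
        exact Fin.ext (by omega)
      subst hαβ
      simp [leftInterface, Matrix.mul_apply, Matrix.one_apply]
    | succ k ih =>
      intro hk
      have hk' : k < d - 1 := by omega
      have hbij : Function.Bijective
          (fun row : (j : Fin (k+1)) → Fin (n j.val) =>
            (row ⟨k, Nat.lt_succ_self k⟩, fun j : Fin k => row j.castSucc)) :=
        (snocEquiv n k).bijective
      rw [leftInterface, submatrix_transpose_mul _ _ _ hbij,
        Matrix.transpose_mul, Matrix.mul_assoc, ← Matrix.mul_assoc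
          ((1 : Matrix (Fin (n k)) (Fin (n k)) ℝ) ⊗ₖ leftInterface n r U k)ᵀ,
        one_kron_transpose_mul, ih (by omega), Matrix.one_kronecker_one, Matrix.one_mul,
        horth k hk']
  have main : ∀ k, k ≤ d - 1 →
      (leftVariational n r U δV k)ᵀ * leftInterface n r U k = 0 := by
    intro k
    induction k with
    | zero => intro _; simp [leftVariational]
    | succ k ih =>
      intro hk
      have hk' : k < d - 1 := by omega
      have hbij : Function.Bijective
          (fun row : (j : Fin (k+1)) → Fin (n j.val) =>
            (row ⟨k, Nat.lt_succ_self k⟩, fun j : Fin k => row j.castSucc)) :=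
        (snocEquiv n k).bijective
      rw [leftVariational, leftInterface, submatrix_add',
        Matrix.transpose_add, Matrix.add_mul,
        submatrix_transpose_mul _ _ _ hbij,
        submatrix_transpose_mul _ _ _ hbij,
        Matrix.transpose_mul, Matrix.transpose_mul,
        Matrix.mul_assoc, ← Matrix.mul_assoc
          ((1 : Matrix (Fin (n k)) (Fin (n k)) ℝ) ⊗ₖ leftVariational n r U δV k)ᵀ,
        one_kron_transpose_mul, ih (by omega), Matrix.kronecker_zero, Matrix.zero_mul,
        Matrix.mul_zero,
        Matrix.mul_assoc, ← Matrix.mul_assoc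
          ((1 : Matrix (Fin (n k)) (Fin (n k)) ℝ) ⊗ₖ leftInterface n r U k)ᵀ,
        one_kron_transpose_mul, horthI k (by omega), Matrix.one_kronecker_one,
        Matrix.one_mul, hgauge k hk']
      simp
  intro k _ hk2
  exact main k hk2

end TT
end

section
/- Let Q : ℝ → ℝ^{m×r} and R : ℝ → ℝ^{r×r} be matrix-valued functions differentiable at t = 0, such that Q(t)ᵀQ(t) = I_r for all t in a neighborhood of 0 and R(0) is invertible. Set X(t) = Q(t)R(t), write Q₀ = Q(0), R₀ = R(0), and let V = X'(0) be the derivative of X at 0. Then the map t ↦ Q(t)Q(t)ᵀ is differentiable at 0 with derivative (I_m − Q₀Q₀ᵀ) V R₀⁻¹ Q₀ᵀ + Q₀ R₀⁻ᵀ Vᵀ (I_m − Q₀Q₀ᵀ). (This is the derivative of the orthogonal projector X̃_{≥k+1}X̃_{≥k+1}ᵀ along a curve, with Q = X̃_{≥k+1}, R = R_k, X = X_{≥k+1}, and V = V_{≥k+1}.) -/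
/-!
The product rule gives `V = Q̇ R₀ + Q₀ Ṙ` and `d/dt (Q Qᵀ) = Q̇ Q₀ᵀ + Q₀ Q̇ᵀ`, while differentiating
`Qᵀ Q = I` shows that `Q̇ᵀ Q₀ + Q₀ᵀ Q̇ = 0`. The projector `P = I - Q₀ Q₀ᵀ` annihilates `Q₀`, so
`P V R₀⁻¹ Q₀ᵀ = P Q̇ Q₀ᵀ`; the skew relation then makes the `Q₀ (⋯) Q₀ᵀ` parts of
`P Q̇ Q₀ᵀ + Q₀ Q̇ᵀ P` cancel.
-/

open Matrix Filter Topology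

namespace Matrix

section EntrywiseDeriv

variable {𝕜 : Type*} [NontriviallyNormedField 𝕜] {l m n : Type*} {x : 𝕜}

def HasEntrywiseDerivAt (A : 𝕜 → Matrix m n 𝕜) (A' : Matrix m n 𝕜) (x : 𝕜) : Prop :=
  ∀ i j, HasDerivAt (fun t => A t i j) (A' i j) x

theorem HasEntrywiseDerivAt.transpose {A : 𝕜 → Matrix m n 𝕜} {A' : Matrix m n 𝕜}
    (hA : HasEntrywiseDerivAt A A' x) : HasEntrywiseDerivAt (fun t => (A t)ᵀ) A'ᵀ x :=
  fun i j => hA j i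

theorem HasEntrywiseDerivAt.mul [Fintype m] {A : 𝕜 → Matrix l m 𝕜} {B : 𝕜 → Matrix m n 𝕜}
    {A' : Matrix l m 𝕜} {B' : Matrix m n 𝕜}
    (hA : HasEntrywiseDerivAt A A' x) (hB : HasEntrywiseDerivAt B B' x) :
    HasEntrywiseDerivAt (fun t => A t * B t) (A' * B x + A x * B') x := by
  intro i k
  have : HasDerivAt (fun t => ∑ j, A t i j * B t j k)
      (∑ j, (A' i j * B x j k + A x i j * B' j k)) x :=
    HasDerivAt.fun_sum fun j _ => (hA i j).mul (hB j k)
  simpa only [mul_apply, add_apply, Finset.sum_add_distrib] using this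

theorem HasEntrywiseDerivAt.unique {A : 𝕜 → Matrix m n 𝕜} {A' A'' : Matrix m n 𝕜}
    (hA' : HasEntrywiseDerivAt A A' x) (hA'' : HasEntrywiseDerivAt A A'' x) : A' = A'' :=
  ext fun i j => (hA' i j).unique (hA'' i j)

theorem HasEntrywiseDerivAt.eq_zero_of_eventuallyEq_const {A : 𝕜 → Matrix m n 𝕜}
    {A' C : Matrix m n 𝕜} (hA : HasEntrywiseDerivAt A A' x) (hC : ∀ᶠ t in 𝓝 x, A t = C) :
    A' = 0 :=
  ext fun i j => (hA i j).unique <|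
    (hasDerivAt_const x (C i j)).congr_of_eventuallyEq
      (hC.mono fun _ ht => congrFun (congrFun ht i) j)

end EntrywiseDeriv

section Algebra

variable {α : Type*} [CommRing α] {m r : Type*} [Fintype m] [DecidableEq m] [Fintype r]

theorem one_sub_mul_transpose_mul_self [DecidableEq r] {Q : Matrix m r α} (hQ : Qᵀ * Q = 1) :
    (1 - Q * Qᵀ) * Q = 0 := by
  rw [Matrix.sub_mul, Matrix.one_mul, Matrix.mul_assoc, hQ, Matrix.mul_one, sub_self]

theorem one_sub_mul_transpose_mul_mul_inv_mul_transpose [DecidableEq r] {Q DQ : Matrix m r α}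
    {R DR : Matrix r r α} (hQ : Qᵀ * Q = 1) (hR : IsUnit R) :
    (1 - Q * Qᵀ) * (DQ * R + Q * DR) * R⁻¹ * Qᵀ = (1 - Q * Qᵀ) * DQ * Qᵀ := by
  rw [Matrix.mul_add, ← Matrix.mul_assoc _ Q, one_sub_mul_transpose_mul_self hQ, Matrix.zero_mul,
    add_zero, ← Matrix.mul_assoc, Matrix.mul_assoc _ R,
    mul_nonsing_inv _ ((isUnit_iff_isUnit_det R).mp hR), Matrix.mul_one]

theorem one_sub_mul_transpose_mul_add_eq_of_skew {Q DQ : Matrix m r α}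
    (hskew : DQᵀ * Q + Qᵀ * DQ = 0) :
    (1 - Q * Qᵀ) * DQ * Qᵀ + Q * DQᵀ * (1 - Q * Qᵀ) = DQ * Qᵀ + Q * DQᵀ := by
  have : Q * (DQᵀ * Q + Qᵀ * DQ) * Qᵀ = 0 := by rw [hskew, Matrix.mul_zero, Matrix.zero_mul]
  simp only [Matrix.mul_add, Matrix.add_mul, Matrix.mul_assoc] at this
  simp only [Matrix.sub_mul, Matrix.mul_sub, Matrix.one_mul, Matrix.mul_one, Matrix.mul_assoc]
  linear_combination (norm := abel) -this

end Algebra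

end Matrix

/-- Derivative of the orthogonal projector `Q(t)Q(t)ᵀ` along a curve
`X(t) = Q(t)R(t)` with `Q(t)ᵀQ(t) = I` near `0` and `R(0)` invertible: writing
`Q₀ = Q 0`, `R₀ = R 0` and `V = X'(0)`, the derivative at `0` is
`(I − Q₀Q₀ᵀ) V R₀⁻¹ Q₀ᵀ + Q₀ R₀⁻ᵀ Vᵀ (I − Q₀Q₀ᵀ)`. Differentiability is entrywise. -/
theorem projector_hasDerivAt (m r : ℕ)
    (Q : ℝ → Matrix (Fin m) (Fin r) ℝ) (R : ℝ → Matrix (Fin r) (Fin r) ℝ)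
    (DQ : Matrix (Fin m) (Fin r) ℝ) (DR : Matrix (Fin r) (Fin r) ℝ)
    (hQ : ∀ i j, HasDerivAt (fun t => Q t i j) (DQ i j) 0)
    (hR : ∀ i j, HasDerivAt (fun t => R t i j) (DR i j) 0)
    (horth : ∀ᶠ t in 𝓝 (0 : ℝ), (Q t)ᵀ * Q t = 1)
    (hinv : IsUnit (R 0))
    (V : Matrix (Fin m) (Fin r) ℝ)
    (hV : ∀ i j, HasDerivAt (fun t => (Q t * R t) i j) (V i j) 0) :
    ∀ (i j : Fin m),
      HasDerivAt (fun t => (Q t * (Q t)ᵀ) i j)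
        ((((1 - Q 0 * (Q 0)ᵀ) * V * (R 0)⁻¹ * (Q 0)ᵀ +
            Q 0 * ((R 0)⁻¹)ᵀ * Vᵀ * (1 - Q 0 * (Q 0)ᵀ) :
          Matrix (Fin m) (Fin m) ℝ)) i j) 0 := by
  have hQ : HasEntrywiseDerivAt Q DQ 0 := hQ
  have hV_eq : V = DQ * R 0 + Q 0 * DR := HasEntrywiseDerivAt.unique hV (hQ.mul hR)
  have hskew : DQᵀ * Q 0 + (Q 0)ᵀ * DQ = 0 :=
    (hQ.transpose.mul hQ).eq_zero_of_eventuallyEq_const horth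
  have hQ₀ : (Q 0)ᵀ * Q 0 = 1 := horth.self_of_nhds
  have hsymm : (1 - Q 0 * (Q 0)ᵀ)ᵀ = 1 - Q 0 * (Q 0)ᵀ := by
    rw [transpose_sub, transpose_one, transpose_mul, transpose_transpose]
  have htangent : (1 - Q 0 * (Q 0)ᵀ) * V * (R 0)⁻¹ * (Q 0)ᵀ =
      (1 - Q 0 * (Q 0)ᵀ) * DQ * (Q 0)ᵀ := by
    rw [hV_eq, one_sub_mul_transpose_mul_mul_inv_mul_transpose hQ₀ hinv]
  have htangent_t : Q 0 * ((R 0)⁻¹)ᵀ * Vᵀ * (1 - Q 0 * (Q 0)ᵀ) =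
      Q 0 * DQᵀ * (1 - Q 0 * (Q 0)ᵀ) := by
    simpa only [transpose_mul, transpose_transpose, hsymm, Matrix.mul_assoc]
      using congrArg transpose htangent
  rw [htangent, htangent_t, one_sub_mul_transpose_mul_add_eq_of_skew hskew]
  exact hQ.mul hQ.transpose
end

section
/- Fix a matrix Z ∈ ℝ^{nm×N} and a positive integer n. Let X_<: ℝ → ℝ^{m×p}, X_≤ : ℝ → ℝ^{nm×r}, X̃_> : ℝ → ℝ^{N×r}, and R : ℝ → ℝ^{r×r} be matrix-valued functions differentiable at 0, such that X̃_>(t)ᵀX̃_>(t) = I_r for all t in a neighborhood of 0 and R(0) is invertible, and set X_>(t) = X̃_>(t)R(t). Write X_< = X_<(0), X_≤ = X_≤(0), X̃_> = X̃_>(0), R = R(0), and let V_< = X_<'(0), V_≤ = X_≤'(0), V_> = X_>'(0). Then the map t ↦ (I_n ⊗ (X_<(t)X_<(t)ᵀ) − X_≤(t)X_≤(t)ᵀ) Z (X̃_>(t)X̃_>(t)ᵀ) is differentiable at 0 with derivative equal to (I_n ⊗ (V_<X_<ᵀ + X_<V_<ᵀ) − (V_≤X_≤ᵀ + X_≤V_≤ᵀ))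 Z X̃_>X̃_>ᵀ + (I_n ⊗ (X_<X_<ᵀ) − X_≤X_≤ᵀ) Z (I_N − X̃_>X̃_>ᵀ) V_> R⁻¹ X̃_>ᵀ + (I_n ⊗ (X_<X_<ᵀ) − X_≤X_≤ᵀ) Z X̃_> R⁻ᵀ V_>ᵀ (I_N − X̃_>X̃_>ᵀ). -/
open Matrix Kronecker Filter Topology

/-- Entrywise differentiability at 0 of a matrix-valued function. -/
def HDat0 {ι κ : Type*} (M : ℝ → Matrix ι κ ℝ) (M' : Matrix ι κ ℝ) : Prop :=
  ∀ i j, HasDerivAt (fun t => M t i j) (M' i j) 0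

lemma HDat0.const {ι κ : Type*} (C : Matrix ι κ ℝ) : HDat0 (fun _ => C) 0 :=
  fun i j => hasDerivAt_const 0 (C i j)

lemma HDat0.transpose {ι κ : Type*} {M : ℝ → Matrix ι κ ℝ} {M'}
    (h : HDat0 M M') : HDat0 (fun t => (M t)ᵀ) M'ᵀ :=
  fun i j => h j i

lemma HDat0.sub {ι κ : Type*} {M N : ℝ → Matrix ι κ ℝ} {M' N'}
    (hM : HDat0 M M') (hN : HDat0 N N') : HDat0 (fun t => M t - N t) (M' - N') :=
  fun i j => by exact (hM i j).sub (hN i j)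

lemma HDat0.mul {ι κ μ : Type*} [Fintype κ] {M : ℝ → Matrix ι κ ℝ} {M'}
    {N : ℝ → Matrix κ μ ℝ} {N'} (hM : HDat0 M M') (hN : HDat0 N N') :
    HDat0 (fun t => M t * N t) (M' * N 0 + M 0 * N') := by
  intro i j
  have h : HasDerivAt (fun t => ∑ k, M t i k * N t k j)
      (∑ k, (M' i k * N 0 k j + M 0 i k * N' k j)) 0 :=
    HasDerivAt.fun_sum fun k _ => (hM i k).mul (hN k j)
  simpa [Matrix.mul_apply, Finset.sum_add_distrib] using h

lemma HDat0.kron_one {ι κ : Type*} {n : ℕ} {M : ℝ → Matrix ι κ ℝ} {M'}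
    (h : HDat0 M M') :
    HDat0 (fun t => (1 : Matrix (Fin n) (Fin n) ℝ) ⊗ₖ M t)
      ((1 : Matrix (Fin n) (Fin n) ℝ) ⊗ₖ M') := by
  rintro ⟨i1, i2⟩ ⟨j1, j2⟩
  simpa [Matrix.kroneckerMap_apply] using
    (h i2 j2).const_mul ((1 : Matrix (Fin n) (Fin n) ℝ) i1 j1)

lemma HDat0.unique' {ι κ : Type*} {M : ℝ → Matrix ι κ ℝ} {M' M''}
    (h : HDat0 M M') (h' : HDat0 M M'') : M' = M'' := by
  ext i j; exact (h i j).unique (h' i j)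

lemma key_alg {N r : ℕ} (X DX Vgt : Matrix (Fin N) (Fin r) ℝ)
    (R0 DR : Matrix (Fin r) (Fin r) ℝ)
    (hO : Xᵀ * X = 1) (hskew : DXᵀ * X + Xᵀ * DX = 0)
    (hR : R0 * R0⁻¹ = 1) (hV : Vgt = DX * R0 + X * DR) :
    (1 - X * Xᵀ) * Vgt * R0⁻¹ * Xᵀ + X * (R0⁻¹)ᵀ * Vgtᵀ * (1 - X * Xᵀ)
      = DX * Xᵀ + X * DXᵀ := by
  have hPX : (1 - X * Xᵀ) * X = 0 := by
    rw [Matrix.sub_mul, Matrix.one_mul, Matrix.mul_assoc, hO, Matrix.mul_one, sub_self]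
  have hXP : Xᵀ * (1 - X * Xᵀ) = 0 := by
    rw [Matrix.mul_sub, Matrix.mul_one, ← Matrix.mul_assoc, hO, Matrix.one_mul, sub_self]
  have hRT : (R0⁻¹)ᵀ * R0ᵀ = 1 := by
    rw [← Matrix.transpose_mul, hR, Matrix.transpose_one]
  have h1 : (1 - X * Xᵀ) * Vgt * R0⁻¹ * Xᵀ = (1 - X * Xᵀ) * DX * Xᵀ := by
    rw [hV, Matrix.mul_add, Matrix.add_mul, Matrix.add_mul]
    have e1 : (1 - X * Xᵀ) * (DX * R0) * R0⁻¹ = (1 - X * Xᵀ) * DX := by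
      rw [Matrix.mul_assoc, Matrix.mul_assoc, hR, Matrix.mul_one]
    have e2 : (1 - X * Xᵀ) * (X * DR) = 0 := by
      rw [← Matrix.mul_assoc, hPX, Matrix.zero_mul]
    rw [e1, e2, Matrix.zero_mul, Matrix.zero_mul, add_zero]
  have h2 : X * (R0⁻¹)ᵀ * Vgtᵀ * (1 - X * Xᵀ) = X * DXᵀ * (1 - X * Xᵀ) := by
    rw [hV, Matrix.transpose_add, Matrix.transpose_mul, Matrix.transpose_mul,
      Matrix.mul_add, Matrix.add_mul]
    have e1 : X * (R0⁻¹)ᵀ * (R0ᵀ * DXᵀ) = X * DXᵀ := by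
      rw [Matrix.mul_assoc X, ← Matrix.mul_assoc (R0⁻¹)ᵀ, hRT, Matrix.one_mul]
    have e2 : X * (R0⁻¹)ᵀ * (DRᵀ * Xᵀ) * (1 - X * Xᵀ) = 0 := by
      rw [Matrix.mul_assoc (X * (R0⁻¹)ᵀ), Matrix.mul_assoc, Matrix.mul_assoc, hXP,
        Matrix.mul_zero, Matrix.mul_zero, Matrix.mul_zero]
    rw [e1, e2, add_zero]
  rw [h1, h2]
  have hskew2 : Xᵀ * DX + DXᵀ * X = 0 := by rw [add_comm]; exact hskew
  have hzero : X * (Xᵀ * (DX * Xᵀ)) + X * (DXᵀ * (X * Xᵀ)) = 0 := by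
    have h := congrArg (fun A => X * A * Xᵀ) hskew2
    simp only [Matrix.mul_add, Matrix.add_mul, Matrix.mul_zero, Matrix.zero_mul,
      Matrix.mul_assoc] at h
    exact h
  rw [Matrix.sub_mul, Matrix.mul_sub, Matrix.mul_one, Matrix.one_mul, Matrix.sub_mul, sub_add_sub_comm]
  rw [show X * Xᵀ * DX * Xᵀ = X * (Xᵀ * (DX * Xᵀ)) by rw [Matrix.mul_assoc, Matrix.mul_assoc],
    show X * DXᵀ * (X * Xᵀ) = X * (DXᵀ * (X * Xᵀ)) by rw [Matrix.mul_assoc],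
    hzero, sub_zero]

/-- Explicit formula for the differential `(D_V P_X^k) Z` of the `k`-th
component of the tangent-space projector, in flattened matrix form: with
`X̃_>(t)ᵀ X̃_>(t) = I` near `0`, `R 0` invertible, `X_>(t) = X̃_>(t) R(t)`,
and `V_< = X_<'(0)`, `V_≤ = X_≤'(0)`, `V_> = X_>'(0)`, the map
`t ↦ (I_n ⊗ X_<(t)X_<(t)ᵀ − X_≤(t)X_≤(t)ᵀ) Z (X̃_>(t)X̃_>(t)ᵀ)` is differentiable at `0`
with the stated three-term derivative. Differentiability is entrywise. -/
theorem projector_component_differential (n m p N r : ℕ) (hn : 0 < n)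
    (Z : Matrix (Fin n × Fin m) (Fin N) ℝ)
    (Xlt : ℝ → Matrix (Fin m) (Fin p) ℝ)
    (Xle : ℝ → Matrix (Fin n × Fin m) (Fin r) ℝ)
    (Xtgt : ℝ → Matrix (Fin N) (Fin r) ℝ)
    (R : ℝ → Matrix (Fin r) (Fin r) ℝ)
    (DXtgt : Matrix (Fin N) (Fin r) ℝ) (DR : Matrix (Fin r) (Fin r) ℝ)
    (hXtgt : ∀ i j, HasDerivAt (fun t => Xtgt t i j) (DXtgt i j) 0)
    (hRd : ∀ i j, HasDerivAt (fun t => R t i j) (DR i j) 0)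
    (horth : ∀ᶠ t in 𝓝 (0 : ℝ), (Xtgt t)ᵀ * Xtgt t = 1)
    (hinv : IsUnit (R 0))
    (Vlt : Matrix (Fin m) (Fin p) ℝ)
    (hVlt : ∀ i j, HasDerivAt (fun t => Xlt t i j) (Vlt i j) 0)
    (Vle : Matrix (Fin n × Fin m) (Fin r) ℝ)
    (hVle : ∀ i j, HasDerivAt (fun t => Xle t i j) (Vle i j) 0)
    (Vgt : Matrix (Fin N) (Fin r) ℝ)
    (hVgt : ∀ i j, HasDerivAt (fun t => (Xtgt t * R t) i j) (Vgt i j) 0) :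
    ∀ (i : Fin n × Fin m) (j : Fin N),
      HasDerivAt
        (fun t =>
          (((((1 : Matrix (Fin n) (Fin n) ℝ) ⊗ₖ (Xlt t * (Xlt t)ᵀ)) - Xle t * (Xle t)ᵀ) * Z *
              (Xtgt t * (Xtgt t)ᵀ) : Matrix (Fin n × Fin m) (Fin N) ℝ)) i j)
        (((((1 : Matrix (Fin n) (Fin n) ℝ) ⊗ₖ (Vlt * (Xlt 0)ᵀ + Xlt 0 * Vltᵀ)) -
                (Vle * (Xle 0)ᵀ + Xle 0 * Vleᵀ)) * Z * (Xtgt 0 * (Xtgt 0)ᵀ) +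
              (((1 : Matrix (Fin n) (Fin n) ℝ) ⊗ₖ (Xlt 0 * (Xlt 0)ᵀ)) - Xle 0 * (Xle 0)ᵀ) * Z *
                ((1 - Xtgt 0 * (Xtgt 0)ᵀ) * Vgt * (R 0)⁻¹ * (Xtgt 0)ᵀ) +
              (((1 : Matrix (Fin n) (Fin n) ℝ) ⊗ₖ (Xlt 0 * (Xlt 0)ᵀ)) - Xle 0 * (Xle 0)ᵀ) * Z *
                (Xtgt 0 * ((R 0)⁻¹)ᵀ * Vgtᵀ * (1 - Xtgt 0 * (Xtgt 0)ᵀ)) :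
            Matrix (Fin n × Fin m) (Fin N) ℝ) i j) 0 := by
  -- entrywise derivative framework
  have hXd : HDat0 Xtgt DXtgt := hXtgt
  have hRd' : HDat0 R DR := hRd
  have hXltd : HDat0 Xlt Vlt := hVlt
  have hXled : HDat0 Xle Vle := hVle
  -- Vgt = DXtgt * R 0 + Xtgt 0 * DR
  have hVgt' : Vgt = DXtgt * R 0 + Xtgt 0 * DR :=
    HDat0.unique' hVgt (hXd.mul hRd')
  -- skew-symmetry from orthogonality
  have hskew : DXtgtᵀ * Xtgt 0 + (Xtgt 0)ᵀ * DXtgt = 0 := by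
    have hc : HDat0 (fun t => (Xtgt t)ᵀ * Xtgt t) 0 := by
      intro i j
      refine (hasDerivAt_const (0 : ℝ) ((1 : Matrix (Fin r) (Fin r) ℝ) i j)).congr_of_eventuallyEq ?_ |>.congr_deriv (by simp)
      filter_upwards [horth] with t ht
      rw [ht]
    have := HDat0.unique' (hXd.transpose.mul hXd) hc
    simpa using this
  have hO : (Xtgt 0)ᵀ * Xtgt 0 = 1 := horth.self_of_nhds
  have hR : R 0 * (R 0)⁻¹ = 1 :=
    Matrix.mul_nonsing_inv _ ((Matrix.isUnit_iff_isUnit_det _).mp hinv)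
  have hkey := key_alg (Xtgt 0) DXtgt Vgt (R 0) DR hO hskew hR hVgt'
  -- derivative of A(t) = 1 ⊗ₖ (Xlt Xltᵀ) - Xle Xleᵀ
  have hA : HDat0
      (fun t => ((1 : Matrix (Fin n) (Fin n) ℝ) ⊗ₖ (Xlt t * (Xlt t)ᵀ)) - Xle t * (Xle t)ᵀ)
      (((1 : Matrix (Fin n) (Fin n) ℝ) ⊗ₖ (Vlt * (Xlt 0)ᵀ + Xlt 0 * Vltᵀ)) -
        (Vle * (Xle 0)ᵀ + Xle 0 * Vleᵀ)) :=
    ((hXltd.mul hXltd.transpose).kron_one).sub (hXled.mul hXled.transpose)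
  -- derivative of B(t) = Xtgt Xtgtᵀ
  have hB : HDat0 (fun t => Xtgt t * (Xtgt t)ᵀ)
      (DXtgt * (Xtgt 0)ᵀ + Xtgt 0 * DXtgtᵀ) := hXd.mul hXd.transpose
  -- derivative of A(t) * Z
  have hAZ : HDat0
      (fun t => (((1 : Matrix (Fin n) (Fin n) ℝ) ⊗ₖ (Xlt t * (Xlt t)ᵀ)) - Xle t * (Xle t)ᵀ) * Z)
      ((((1 : Matrix (Fin n) (Fin n) ℝ) ⊗ₖ (Vlt * (Xlt 0)ᵀ + Xlt 0 * Vltᵀ)) -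
        (Vle * (Xle 0)ᵀ + Xle 0 * Vleᵀ)) * Z) := by
    have := hA.mul (HDat0.const Z)
    simpa using this
  have hF := hAZ.mul hB
  intro i j
  have goal_eq :
      ((((1 : Matrix (Fin n) (Fin n) ℝ) ⊗ₖ (Vlt * (Xlt 0)ᵀ + Xlt 0 * Vltᵀ)) -
                (Vle * (Xle 0)ᵀ + Xle 0 * Vleᵀ)) * Z * (Xtgt 0 * (Xtgt 0)ᵀ) +
              (((1 : Matrix (Fin n) (Fin n) ℝ) ⊗ₖ (Xlt 0 * (Xlt 0)ᵀ)) - Xle 0 * (Xle 0)ᵀ) * Z *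
                ((1 - Xtgt 0 * (Xtgt 0)ᵀ) * Vgt * (R 0)⁻¹ * (Xtgt 0)ᵀ) +
              (((1 : Matrix (Fin n) (Fin n) ℝ) ⊗ₖ (Xlt 0 * (Xlt 0)ᵀ)) - Xle 0 * (Xle 0)ᵀ) * Z *
                (Xtgt 0 * ((R 0)⁻¹)ᵀ * Vgtᵀ * (1 - Xtgt 0 * (Xtgt 0)ᵀ)) :
            Matrix (Fin n × Fin m) (Fin N) ℝ)
      = (((1 : Matrix (Fin n) (Fin n) ℝ) ⊗ₖ (Vlt * (Xlt 0)ᵀ + Xlt 0 * Vltᵀ)) -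
          (Vle * (Xle 0)ᵀ + Xle 0 * Vleᵀ)) * Z * (Xtgt 0 * (Xtgt 0)ᵀ) +
        ((((1 : Matrix (Fin n) (Fin n) ℝ) ⊗ₖ (Xlt 0 * (Xlt 0)ᵀ)) - Xle 0 * (Xle 0)ᵀ) * Z) *
          (DXtgt * (Xtgt 0)ᵀ + Xtgt 0 * DXtgtᵀ) := by
    rw [add_assoc, ← Matrix.mul_add, hkey]
  rw [goal_eq]
  exact hF i j
end

section
/- Let X_< ∈ ℝ^{m×p} with X_<ᵀX_< = I_p, U^L ∈ ℝ^{np×r} with (U^L)ᵀU^L = I_r, and set X_≤ = (I_n ⊗ X_<)U^L. Let X̃_> ∈ ℝ^{N×r} with X̃_>ᵀX̃_> = I_r and let R ∈ ℝ^{r×r} be invertible. Let V_< ∈ ℝ^{m×p} satisfy X_<ᵀV_< = 0, let δV ∈ ℝ^{np×r} satisfy (δV)ᵀU^L = 0, set V_≤ = (I_n ⊗ V_<)U^L + (I_n ⊗ X_<)δV, and let V_> ∈ ℝ^{N×r} be arbitrary. Let Z ∈ ℝ^{nm×N} and define D := (I_n ⊗ (V_<X_<ᵀ + X_<V_<ᵀ)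 − (V_≤X_≤ᵀ + X_≤V_≤ᵀ)) Z X̃_>X̃_>ᵀ + (I_n ⊗ (X_<X_<ᵀ) − X_≤X_≤ᵀ) Z (I_N − X̃_>X̃_>ᵀ) V_> R⁻¹ X̃_>ᵀ + (I_n ⊗ (X_<X_<ᵀ) − X_≤X_≤ᵀ) Z X̃_> R⁻ᵀ V_>ᵀ (I_N − X̃_>X̃_>ᵀ). Then (I_n ⊗ (X_<X_<ᵀ) − X_≤X_≤ᵀ) D X̃_>X̃_>ᵀ = (I_n ⊗ X_<)(I_{np} − U^L(U^L)ᵀ)(I_n ⊗ V_<ᵀ) Z X̃_>X̃_>ᵀ − (I_n ⊗ X_<) δV (U^L)ᵀ (I_n ⊗ X_<ᵀ) Z X̃_>X̃_>ᵀ + (I_n ⊗ X_<)(I_{np} − U^L(U^L)ᵀ)(I_n ⊗ X_<ᵀ) Z (I_N − X̃_>X̃_>ᵀ) V_> R⁻¹ X̃_>ᵀ. (This is the diagonal term P_X^k D_V P_X^k Z of the correction term of the Riemannian Hessian on the fixed TT-rank manifold, for k < d, in flattened matrix form with X_< = X_{≤k−1}, U^L = U_k^L, δV = δV_k^L, X̃_>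 = X̃_{≥k+1}, R = R_k.) -/
open Matrix Kronecker

section Aux

variable {l m o q : Type*} [Fintype l] [Fintype m] [Fintype o] [Fintype q]

private lemma k_transpose {n : ℕ} (A : Matrix l m ℝ) :
    (((1 : Matrix (Fin n) (Fin n) ℝ) ⊗ₖ A))ᵀ = (1 : Matrix (Fin n) (Fin n) ℝ) ⊗ₖ Aᵀ := by
  rw [← Matrix.kroneckerMap_transpose, Matrix.transpose_one]

private lemma k_mul_k {n : ℕ} (A : Matrix l m ℝ) (B : Matrix m o ℝ) :
    ((1 : Matrix (Fin n) (Fin n) ℝ) ⊗ₖ A) * ((1 : Matrix (Fin n) (Fin n) ℝ) ⊗ₖ B) =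
      (1 : Matrix (Fin n) (Fin n) ℝ) ⊗ₖ (A * B) := by
  rw [← Matrix.mul_kronecker_mul, Matrix.one_mul]

private lemma k_mul_k' {n : ℕ} (A : Matrix l m ℝ) (B : Matrix m o ℝ)
    (M : Matrix ((Fin n) × o) q ℝ) :
    ((1 : Matrix (Fin n) (Fin n) ℝ) ⊗ₖ A) * (((1 : Matrix (Fin n) (Fin n) ℝ) ⊗ₖ B) * M) =
      ((1 : Matrix (Fin n) (Fin n) ℝ) ⊗ₖ (A * B)) * M := by
  rw [← Matrix.mul_assoc, k_mul_k]

private lemma assoc_reduce {a b c d : Type*} [Fintype b] [Fintype c]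
    {A : Matrix a b ℝ} {B : Matrix b c ℝ} {C : Matrix a c ℝ} (h : A * B = C)
    (M : Matrix c d ℝ) : A * (B * M) = C * M := by
  rw [← Matrix.mul_assoc, h]

end Aux

set_option maxHeartbeats 2000000 in
/-- The diagonal term `P_X^k D_V P_X^k Z` of the correction term of the
Riemannian Hessian, for `k < d`, in flattened matrix form: projecting the three-term
differential `D` by the `k`-th projector component gives the stated formula. -/
theorem diagonal_term_formula (n m p N r : ℕ)
    (Xlt : Matrix (Fin m) (Fin p) ℝ) (hXlt : Xltᵀ * Xlt = 1)
    (Ul : Matrix (Fin n × Fin p) (Fin r) ℝ) (hUl : Ulᵀ * Ul = 1)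
    (Xle : Matrix (Fin n × Fin m) (Fin r) ℝ)
    (hXle : Xle = ((1 : Matrix (Fin n) (Fin n) ℝ) ⊗ₖ Xlt) * Ul)
    (Xtgt : Matrix (Fin N) (Fin r) ℝ) (hXtgt : Xtgtᵀ * Xtgt = 1)
    (R : Matrix (Fin r) (Fin r) ℝ) (hR : IsUnit R)
    (Vlt : Matrix (Fin m) (Fin p) ℝ) (hVlt : Xltᵀ * Vlt = 0)
    (dV : Matrix (Fin n × Fin p) (Fin r) ℝ) (hdV : dVᵀ * Ul = 0)
    (Vle : Matrix (Fin n × Fin m) (Fin r) ℝ)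
    (hVle : Vle = ((1 : Matrix (Fin n) (Fin n) ℝ) ⊗ₖ Vlt) * Ul +
        ((1 : Matrix (Fin n) (Fin n) ℝ) ⊗ₖ Xlt) * dV)
    (Vgt : Matrix (Fin N) (Fin r) ℝ)
    (Z : Matrix (Fin n × Fin m) (Fin N) ℝ)
    (D : Matrix (Fin n × Fin m) (Fin N) ℝ)
    (hD : D =
      (((1 : Matrix (Fin n) (Fin n) ℝ) ⊗ₖ (Vlt * Xltᵀ + Xlt * Vltᵀ)) -
            (Vle * Xleᵀ + Xle * Vleᵀ)) * Z * (Xtgt * Xtgtᵀ) +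
        (((1 : Matrix (Fin n) (Fin n) ℝ) ⊗ₖ (Xlt * Xltᵀ)) - Xle * Xleᵀ) * Z *
          ((1 - Xtgt * Xtgtᵀ) * Vgt * R⁻¹ * Xtgtᵀ) +
        (((1 : Matrix (Fin n) (Fin n) ℝ) ⊗ₖ (Xlt * Xltᵀ)) - Xle * Xleᵀ) * Z *
          (Xtgt * (R⁻¹)ᵀ * Vgtᵀ * (1 - Xtgt * Xtgtᵀ))) :
    (((1 : Matrix (Fin n) (Fin n) ℝ) ⊗ₖ (Xlt * Xltᵀ)) - Xle * Xleᵀ) * D * (Xtgt * Xtgtᵀ) =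
      ((1 : Matrix (Fin n) (Fin n) ℝ) ⊗ₖ Xlt) * (1 - Ul * Ulᵀ) *
          ((1 : Matrix (Fin n) (Fin n) ℝ) ⊗ₖ Vltᵀ) * Z * (Xtgt * Xtgtᵀ) -
        ((1 : Matrix (Fin n) (Fin n) ℝ) ⊗ₖ Xlt) * dV * Ulᵀ *
          ((1 : Matrix (Fin n) (Fin n) ℝ) ⊗ₖ Xltᵀ) * Z * (Xtgt * Xtgtᵀ) +
        ((1 : Matrix (Fin n) (Fin n) ℝ) ⊗ₖ Xlt) * (1 - Ul * Ulᵀ) *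
          ((1 : Matrix (Fin n) (Fin n) ℝ) ⊗ₖ Xltᵀ) * Z *
          ((1 - Xtgt * Xtgtᵀ) * Vgt * R⁻¹ * Xtgtᵀ) := by
  have hVlt' : Vltᵀ * Xlt = 0 := by
    have := congrArg Matrix.transpose hVlt
    simpa [Matrix.transpose_mul] using this
  have hdV' : Ulᵀ * dV = 0 := by
    have := congrArg Matrix.transpose hdV
    simpa [Matrix.transpose_mul] using this
  subst hD hVle hXle
  simp only [Matrix.transpose_mul, Matrix.transpose_add, k_transpose,
    Matrix.mul_add, Matrix.add_mul, Matrix.mul_sub, Matrix.sub_mul,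
    Matrix.mul_assoc, Matrix.mul_one, Matrix.one_mul,
    k_mul_k, k_mul_k']
  simp only [← Matrix.mul_assoc, k_mul_k]
  simp only [Matrix.mul_assoc]
  -- now reduce using orthogonality
  simp only [hXlt, hVlt, hVlt', Matrix.one_kronecker_one, Matrix.kronecker_zero,
    Matrix.zero_mul, Matrix.mul_zero, Matrix.one_mul, Matrix.mul_one]
  simp only [assoc_reduce hXlt, assoc_reduce hVlt, assoc_reduce hVlt', assoc_reduce hdV,
    assoc_reduce hdV', assoc_reduce hUl, assoc_reduce hXtgt, hXlt, hVlt, hVlt', hdV, hdV', hUl,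
    hXtgt, Matrix.zero_mul, Matrix.mul_zero, Matrix.one_mul, Matrix.mul_one,
    Matrix.kronecker_zero, Matrix.one_kronecker_one, zero_add, add_zero, sub_zero, sub_self, zero_sub, neg_neg]
end

section
/- Let X_< ∈ ℝ^{m×p} with X_<ᵀX_< = I_p, U^L ∈ ℝ^{np×r} with (U^L)ᵀU^L = I_r, and set X_≤ = (I_n ⊗ X_<)U^L. Let X̃_> ∈ ℝ^{N×r} with X̃_>ᵀX̃_> = I_r and let R ∈ ℝ^{r×r} be invertible. Let V_< ∈ ℝ^{m×p} satisfy V_<ᵀX_< = 0, let δV ∈ ℝ^{np×r} satisfy (δV)ᵀU^L = 0, set V_≤ = (I_n ⊗ V_<)U^L + (I_n ⊗ X_<)δV, and let V_>, Y_> ∈ ℝ^{N×r} with Y_> arbitrary. Define D(M) for M ∈ ℝ^{nm×N} as the three-term expression D(M) := (I_n ⊗ (V_<X_<ᵀ + X_<V_<ᵀ) − (V_≤X_≤ᵀ + X_≤V_≤ᵀ)) M X̃_>X̃_>ᵀ + (I_n ⊗ (X_<X_<ᵀ) − X_≤X_≤ᵀ) M (I_N − X̃_>X̃_>ᵀ)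 V_> R⁻¹ X̃_>ᵀ + (I_n ⊗ (X_<X_<ᵀ) − X_≤X_≤ᵀ) M X̃_> R⁻ᵀ V_>ᵀ (I_N − X̃_>X̃_>ᵀ). Then −D(X_≤ Y_>ᵀ) = (I_n ⊗ X_<) δV Y_>ᵀ X̃_> X̃_>ᵀ. (This is the cross-term P_X^i D_V P_X^j Z = −(D_V P_X^i)(P_X^j Z) of the correction term of the Riemannian Hessian on the fixed TT-rank manifold in the case j > i, i < d, in flattened matrix form, where the i-th flattening of P_X^j Z is X_≤(Y_>)ᵀ with Y_> = Y^j_{>i}.) -/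
open Matrix Kronecker

/-- The cross-term `P_X^i D_V P_X^j Z = −(D_V P_X^i)(P_X^j Z)` in the
case `j > i`, `i < d`, in flattened matrix form: applying (minus) the three-term
differential `D` to `X_≤ Y_>ᵀ` gives `(I_n ⊗ X_<) δV Y_>ᵀ X̃_> X̃_>ᵀ`. -/
theorem cross_term_formula_gt (n m p N r : ℕ)
    (Xlt : Matrix (Fin m) (Fin p) ℝ) (hXlt : Xltᵀ * Xlt = 1)
    (Ul : Matrix (Fin n × Fin p) (Fin r) ℝ) (hUl : Ulᵀ * Ul = 1)
    (Xle : Matrix (Fin n × Fin m) (Fin r) ℝ)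
    (hXle : Xle = ((1 : Matrix (Fin n) (Fin n) ℝ) ⊗ₖ Xlt) * Ul)
    (Xtgt : Matrix (Fin N) (Fin r) ℝ) (hXtgt : Xtgtᵀ * Xtgt = 1)
    (R : Matrix (Fin r) (Fin r) ℝ) (hR : IsUnit R)
    (Vlt : Matrix (Fin m) (Fin p) ℝ) (hVlt : Vltᵀ * Xlt = 0)
    (dV : Matrix (Fin n × Fin p) (Fin r) ℝ) (hdV : dVᵀ * Ul = 0)
    (Vle : Matrix (Fin n × Fin m) (Fin r) ℝ)
    (hVle : Vle = ((1 : Matrix (Fin n) (Fin n) ℝ) ⊗ₖ Vlt) * Ul +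
        ((1 : Matrix (Fin n) (Fin n) ℝ) ⊗ₖ Xlt) * dV)
    (Vgt : Matrix (Fin N) (Fin r) ℝ)
    (Ygt : Matrix (Fin N) (Fin r) ℝ)
    (D : Matrix (Fin n × Fin m) (Fin N) ℝ → Matrix (Fin n × Fin m) (Fin N) ℝ)
    (hD : ∀ M, D M =
      (((1 : Matrix (Fin n) (Fin n) ℝ) ⊗ₖ (Vlt * Xltᵀ + Xlt * Vltᵀ)) -
            (Vle * Xleᵀ + Xle * Vleᵀ)) * M * (Xtgt * Xtgtᵀ) +
        (((1 : Matrix (Fin n) (Fin n) ℝ) ⊗ₖ (Xlt * Xltᵀ)) - Xle * Xleᵀ) * M *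
          ((1 - Xtgt * Xtgtᵀ) * Vgt * R⁻¹ * Xtgtᵀ) +
        (((1 : Matrix (Fin n) (Fin n) ℝ) ⊗ₖ (Xlt * Xltᵀ)) - Xle * Xleᵀ) * M *
          (Xtgt * (R⁻¹)ᵀ * Vgtᵀ * (1 - Xtgt * Xtgtᵀ))) :
    -D (Xle * Ygtᵀ) =
      ((1 : Matrix (Fin n) (Fin n) ℝ) ⊗ₖ Xlt) * dV * Ygtᵀ * Xtgt * Xtgtᵀ := by
  set A := ((1 : Matrix (Fin n) (Fin n) ℝ) ⊗ₖ Xlt) with hA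
  set B := ((1 : Matrix (Fin n) (Fin n) ℝ) ⊗ₖ Vlt) with hB
  have hXV : Xltᵀ * Vlt = 0 := by
    have := congrArg Matrix.transpose hVlt
    simpa [Matrix.transpose_mul] using this
  have hUd : Ulᵀ * dV = 0 := by
    have := congrArg Matrix.transpose hdV
    simpa [Matrix.transpose_mul] using this
  have hAA : Aᵀ * A = 1 := by
    simp [hA, ← Matrix.kroneckerMap_transpose, Matrix.transpose_one, ← Matrix.mul_kronecker_mul, hXlt, Matrix.one_kronecker_one]
  have hBA : Bᵀ * A = 0 := by
    simp [hA, hB, ← Matrix.kroneckerMap_transpose, Matrix.transpose_one, ← Matrix.mul_kronecker_mul, hVlt, Matrix.kronecker_zero]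
  have hAB : Aᵀ * B = 0 := by
    simp [hA, hB, ← Matrix.kroneckerMap_transpose, Matrix.transpose_one, ← Matrix.mul_kronecker_mul, hXV, Matrix.kronecker_zero]
  have hkXX : ((1 : Matrix (Fin n) (Fin n) ℝ) ⊗ₖ (Xlt * Xltᵀ)) = A * Aᵀ := by
    simp [hA, ← Matrix.kroneckerMap_transpose, Matrix.transpose_one, ← Matrix.mul_kronecker_mul]
  have hkVX : ((1 : Matrix (Fin n) (Fin n) ℝ) ⊗ₖ (Vlt * Xltᵀ + Xlt * Vltᵀ)) =
      B * Aᵀ + A * Bᵀ := by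
    simp [hA, hB, ← Matrix.kroneckerMap_transpose, Matrix.transpose_one, ← Matrix.mul_kronecker_mul, Matrix.kronecker_add]
  have hAA' : ∀ {ι : Type} (C : Matrix (Fin n × Fin p) ι ℝ), Aᵀ * (A * C) = C := by
    intro ι C; rw [← Matrix.mul_assoc, hAA, Matrix.one_mul]
  have hBA' : ∀ {ι : Type} (C : Matrix (Fin n × Fin p) ι ℝ), Bᵀ * (A * C) = 0 := by
    intro ι C; rw [← Matrix.mul_assoc, hBA, Matrix.zero_mul]
  have hAB' : ∀ {ι : Type} (C : Matrix (Fin n × Fin p) ι ℝ), Aᵀ * (B * C) = 0 := by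
    intro ι C; rw [← Matrix.mul_assoc, hAB, Matrix.zero_mul]
  have hUU' : ∀ {ι : Type} (C : Matrix (Fin r) ι ℝ), Ulᵀ * (Ul * C) = C := by
    intro ι C; rw [← Matrix.mul_assoc, hUl, Matrix.one_mul]
  have hdU' : ∀ {ι : Type} (C : Matrix (Fin r) ι ℝ), dVᵀ * (Ul * C) = 0 := by
    intro ι C; rw [← Matrix.mul_assoc, hdV, Matrix.zero_mul]
  have hUd' : ∀ {ι : Type} (C : Matrix (Fin r) ι ℝ), Ulᵀ * (dV * C) = 0 := by
    intro ι C; rw [← Matrix.mul_assoc, hUd, Matrix.zero_mul]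
  rw [hD, hXle, hVle, hkXX, hkVX]
  simp only [Matrix.transpose_mul, Matrix.transpose_add, Matrix.add_mul, Matrix.mul_add,
    Matrix.sub_mul, Matrix.mul_sub, Matrix.mul_assoc, hAA', hBA', hAB', hUU', hdU', hUd',
    Matrix.mul_zero, Matrix.zero_mul, Matrix.mul_one, Matrix.one_mul, sub_self,
    zero_add, add_zero, sub_zero, zero_sub, neg_neg,
    neg_sub, neg_add_rev]
  abel
end

section
/- Let X_< ∈ ℝ^{m×p} with X_<ᵀX_< = I_p, U^L ∈ ℝ^{np×r} with (U^L)ᵀU^L = I_r, and set X_≤ = (I_n ⊗ X_<)U^L. Let X̃_> ∈ ℝ^{N×r} with X̃_>ᵀX̃_> = I_r and let R ∈ ℝ^{r×r} be invertible. Let V_< ∈ ℝ^{m×p} satisfy V_<ᵀX_< = 0, let δV ∈ ℝ^{np×r} satisfy (δV)ᵀU^L = 0, set V_≤ = (I_n ⊗ V_<)U^L + (I_n ⊗ X_<)δV, and let V_> ∈ ℝ^{N×r}. Let Y_≤ ∈ ℝ^{nm×r} satisfy X_≤ᵀY_≤ = 0 and (I_n ⊗ X_<ᵀ)Y_≤ =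 0. Define D(M) for M ∈ ℝ^{nm×N} as the three-term expression D(M) := (I_n ⊗ (V_<X_<ᵀ + X_<V_<ᵀ) − (V_≤X_≤ᵀ + X_≤V_≤ᵀ)) M X̃_>X̃_>ᵀ + (I_n ⊗ (X_<X_<ᵀ) − X_≤X_≤ᵀ) M (I_N − X̃_>X̃_>ᵀ) V_> R⁻¹ X̃_>ᵀ + (I_n ⊗ (X_<X_<ᵀ) − X_≤X_≤ᵀ) M X̃_> R⁻ᵀ V_>ᵀ (I_N − X̃_>X̃_>ᵀ). Then −D(Y_≤ X̃_>ᵀ) = −(I_n ⊗ X_<)(I_{np} − U^L(U^L)ᵀ)(I_n ⊗ V_<ᵀ) Y_≤ X̃_>ᵀ. (This is the cross-term P_X^i D_V P_X^j Z = −(D_V P_X^i)(P_X^j Z) of the correction term of the Riemannian Hessian on the fixed TT-rank manifold in the case j < i, i < d, in flattened matrix form, where the i-th flattening of P_X^j Z is Y_≤ X̃_>ᵀ with Y_≤ = Y^j_{≤i}.) -/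
open Matrix Kronecker

/-- The cross-term `P_X^i D_V P_X^j Z = −(D_V P_X^i)(P_X^j Z)` in the
case `j < i`, `i < d`, in flattened matrix form: applying (minus) the three-term
differential `D` to `Y_≤ X̃_>ᵀ` gives `−(I_n ⊗ X_<)(I_{np} − U^L(U^L)ᵀ)(I_n ⊗ V_<ᵀ) Y_≤ X̃_>ᵀ`. -/
theorem cross_term_formula_lt (n m p N r : ℕ)
    (Xlt : Matrix (Fin m) (Fin p) ℝ) (hXlt : Xltᵀ * Xlt = 1)
    (Ul : Matrix (Fin n × Fin p) (Fin r) ℝ) (hUl : Ulᵀ * Ul = 1)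
    (Xle : Matrix (Fin n × Fin m) (Fin r) ℝ)
    (hXle : Xle = ((1 : Matrix (Fin n) (Fin n) ℝ) ⊗ₖ Xlt) * Ul)
    (Xtgt : Matrix (Fin N) (Fin r) ℝ) (hXtgt : Xtgtᵀ * Xtgt = 1)
    (R : Matrix (Fin r) (Fin r) ℝ) (hR : IsUnit R)
    (Vlt : Matrix (Fin m) (Fin p) ℝ) (hVlt : Vltᵀ * Xlt = 0)
    (dV : Matrix (Fin n × Fin p) (Fin r) ℝ) (hdV : dVᵀ * Ul = 0)
    (Vle : Matrix (Fin n × Fin m) (Fin r) ℝ)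
    (hVle : Vle = ((1 : Matrix (Fin n) (Fin n) ℝ) ⊗ₖ Vlt) * Ul +
        ((1 : Matrix (Fin n) (Fin n) ℝ) ⊗ₖ Xlt) * dV)
    (Vgt : Matrix (Fin N) (Fin r) ℝ)
    (Yle : Matrix (Fin n × Fin m) (Fin r) ℝ)
    (hYle1 : Xleᵀ * Yle = 0)
    (hYle2 : ((1 : Matrix (Fin n) (Fin n) ℝ) ⊗ₖ Xltᵀ) * Yle = 0)
    (D : Matrix (Fin n × Fin m) (Fin N) ℝ → Matrix (Fin n × Fin m) (Fin N) ℝ)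
    (hD : ∀ M, D M =
      (((1 : Matrix (Fin n) (Fin n) ℝ) ⊗ₖ (Vlt * Xltᵀ + Xlt * Vltᵀ)) -
            (Vle * Xleᵀ + Xle * Vleᵀ)) * M * (Xtgt * Xtgtᵀ) +
        (((1 : Matrix (Fin n) (Fin n) ℝ) ⊗ₖ (Xlt * Xltᵀ)) - Xle * Xleᵀ) * M *
          ((1 - Xtgt * Xtgtᵀ) * Vgt * R⁻¹ * Xtgtᵀ) +
        (((1 : Matrix (Fin n) (Fin n) ℝ) ⊗ₖ (Xlt * Xltᵀ)) - Xle * Xleᵀ) * M *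
          (Xtgt * (R⁻¹)ᵀ * Vgtᵀ * (1 - Xtgt * Xtgtᵀ))) :
    -D (Yle * Xtgtᵀ) =
      -(((1 : Matrix (Fin n) (Fin n) ℝ) ⊗ₖ Xlt) * (1 - Ul * Ulᵀ) *
        ((1 : Matrix (Fin n) (Fin n) ℝ) ⊗ₖ Vltᵀ) * Yle * Xtgtᵀ) := by
  have hkmul : ∀ {a b c : ℕ} (A : Matrix (Fin a) (Fin b) ℝ) (B : Matrix (Fin b) (Fin c) ℝ),
      ((1 : Matrix (Fin n) (Fin n) ℝ) ⊗ₖ A) * ((1 : Matrix (Fin n) (Fin n) ℝ) ⊗ₖ B)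
        = (1 : Matrix (Fin n) (Fin n) ℝ) ⊗ₖ (A * B) := by
    intro a b c A B
    rw [← Matrix.mul_kronecker_mul, one_mul]
  -- B * Yle = 0
  have hBY : (((1 : Matrix (Fin n) (Fin n) ℝ) ⊗ₖ (Xlt * Xltᵀ)) - Xle * Xleᵀ) * Yle = 0 := by
    rw [Matrix.sub_mul, ← hkmul, Matrix.mul_assoc ((1 : Matrix (Fin n) (Fin n) ℝ) ⊗ₖ Xlt),
      hYle2, Matrix.mul_zero, Matrix.mul_assoc, hYle1, Matrix.mul_zero, sub_self]
  -- transpose facts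
  have hT : ∀ (A : Matrix (Fin m) (Fin p) ℝ),
      (((1 : Matrix (Fin n) (Fin n) ℝ) ⊗ₖ A))ᵀ = (1 : Matrix (Fin n) (Fin n) ℝ) ⊗ₖ Aᵀ := by
    intro A
    rw [← Matrix.kroneckerMap_transpose, Matrix.transpose_one]
  -- Vleᵀ * Yle
  have hVleY : Vleᵀ * Yle = Ulᵀ * (((1 : Matrix (Fin n) (Fin n) ℝ) ⊗ₖ Vltᵀ) * Yle) := by
    rw [hVle, Matrix.transpose_add, Matrix.transpose_mul, Matrix.transpose_mul, hT, hT,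
      Matrix.add_mul, Matrix.mul_assoc, Matrix.mul_assoc, hYle2, Matrix.mul_zero, add_zero]
  -- A * Yle
  have hAY : ((((1 : Matrix (Fin n) (Fin n) ℝ) ⊗ₖ (Vlt * Xltᵀ + Xlt * Vltᵀ)) -
        (Vle * Xleᵀ + Xle * Vleᵀ)) * Yle) =
      ((1 : Matrix (Fin n) (Fin n) ℝ) ⊗ₖ Xlt) * (1 - Ul * Ulᵀ) *
        (((1 : Matrix (Fin n) (Fin n) ℝ) ⊗ₖ Vltᵀ) * Yle) := by
    rw [Matrix.sub_mul, Matrix.kroneckerMap_add_right _ (fun a b₁ b₂ => mul_add a b₁ b₂), Matrix.add_mul, ← hkmul,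
      Matrix.mul_assoc ((1 : Matrix (Fin n) (Fin n) ℝ) ⊗ₖ Vlt), hYle2, Matrix.mul_zero,
      zero_add, Matrix.add_mul, Matrix.mul_assoc Vle, hYle1, Matrix.mul_zero, zero_add,
      Matrix.mul_assoc Xle, hVleY, ← hkmul, hXle, Matrix.mul_sub, Matrix.mul_one,
      Matrix.sub_mul]
    ring_nf
    rw [Matrix.mul_assoc, Matrix.mul_assoc, Matrix.mul_assoc, Matrix.mul_assoc]
  rw [hD]
  have hassoc : ∀ (M : Matrix (Fin n × Fin m) (Fin n × Fin m) ℝ)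
      (C : Matrix (Fin N) (Fin N) ℝ),
      M * (Yle * Xtgtᵀ) * C = (M * Yle) * (Xtgtᵀ * C) := by
    intro M C
    rw [Matrix.mul_assoc, Matrix.mul_assoc, Matrix.mul_assoc]
  rw [hassoc, hassoc, hassoc, hBY, Matrix.zero_mul, Matrix.zero_mul, add_zero, add_zero,
    hAY]
  have hXX : Xtgtᵀ * (Xtgt * Xtgtᵀ) = Xtgtᵀ := by
    rw [← Matrix.mul_assoc, hXtgt, Matrix.one_mul]
  rw [hXX]
  simp only [Matrix.mul_assoc]
end
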